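/- Let f(n) denote the maximum number of sets of cardinality at least 2 in a 2-laminar family of subsets of [n]. Then for all n > 2, f(n)/binom(n,2) ≤ 1/binom(n,2) + max_{2 ≤ k < n} f(k)/binom(k,2). -/

import Mathlib

/-- `f n` is the maximum number of sets of cardinality at least `2` in a `2`-laminar
family of subsets of `[n]`. -/
noncomputable def f (n : ℕ) : ℕ :=
  sSup {m | ∃ F : Finset (Finset (Fin n)),
    (∀ A ∈ F, ∀ B ∈ F, 2 ≤ (A ∩ B).card → A ⊆ B ∨ B ⊆ A) ∧
    (∀ A ∈ F, 2 ≤ A.card) ∧ F.card = m}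

/-!
Take a largest family on `[n]` and discard `[n]` itself. Every remaining set lies below a maximal
one, and by `2`-laminarity two distinct maximal sets share at most one point, so their sets of
pairs are disjoint: `∑ C(|A|, 2) ≤ C(n, 2)` over the maximal sets `A`. The sets below a maximal
`A` form a `2`-laminar family on `A`, so there are at most
`f |A| ≤ C(|A|, 2) · max_{2 ≤ k < n} f(k) / C(k, 2)` of them, and summing over `A` gives
`f n ≤ 1 + C(n, 2) · max_{2 ≤ k < n} f(k) / C(k, 2)`.
-/

open Finset

variable {α β : Type*} [DecidableEq α]

def IsLaminar (t : ℕ) (F : Finset (Finset α)) : Prop :=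
  ∀ A ∈ F, ∀ B ∈ F, t ≤ #(A ∩ B) → A ⊆ B ∨ B ⊆ A

namespace IsLaminar

variable {t : ℕ} {F G : Finset (Finset α)}

theorem subset (hF : IsLaminar t F) (hGF : G ⊆ F) : IsLaminar t G :=
  fun A hA B hB => hF A (hGF hA) B (hGF hB)

theorem map_iff [DecidableEq β] (e : α ↪ β) :
    IsLaminar t (F.map (mapEmbedding e).toEmbedding) ↔ IsLaminar t F := by
  simp [IsLaminar, mapEmbedding, ← map_inter]

theorem card_inter_lt_of_maximal (hF : IsLaminar t F) {A B : Finset α}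
    (hA : Maximal (· ∈ F) A) (hB : Maximal (· ∈ F) B) (hAB : A ≠ B) : #(A ∩ B) < t := by
  by_contra! h
  rcases hF A hA.prop B hB.prop h with hAB' | hBA
  · exact hAB (hA.eq_of_le hB.prop hAB')
  · exact hAB (hB.eq_of_le hA.prop hBA).symm

end IsLaminar

theorem sum_choose_card_le_of_pairwise_card_inter_lt [Fintype α] {t : ℕ}
    {M : Finset (Finset α)} (hM : (M : Set (Finset α)).Pairwise fun A B => #(A ∩ B) < t) :
    ∑ A ∈ M, (#A).choose t ≤ (Fintype.card α).choose t := by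
  have hdisj : (M : Set (Finset α)).PairwiseDisjoint (powersetCard t) := by
    intro A hA B hB hAB
    refine disjoint_left.2 fun P hPA hPB => ?_
    rw [mem_powersetCard] at hPA hPB
    have hP := card_le_card (subset_inter hPA.1 hPB.1)
    exact (hM hA hB hAB).not_ge (hPA.2 ▸ hP)
  calc ∑ A ∈ M, (#A).choose t = #(M.biUnion (powersetCard t)) := by
        simp only [card_biUnion hdisj, card_powersetCard]
    _ ≤ #(powersetCard t (univ : Finset α)) :=
        card_le_card (biUnion_subset.2 fun A _ => powersetCard_mono (subset_univ A))
    _ = (Fintype.card α).choose t := by rw [card_powersetCard, card_univ]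

theorem bddAbove_f_set (n : ℕ) : BddAbove {m | ∃ F : Finset (Finset (Fin n)),
    IsLaminar 2 F ∧ (∀ A ∈ F, 2 ≤ #A) ∧ #F = m} :=
  ⟨Fintype.card (Finset (Fin n)), by rintro m ⟨F, -, -, rfl⟩; exact card_le_univ F⟩

theorem exists_isLaminar_card_eq_f (n : ℕ) :
    ∃ F : Finset (Finset (Fin n)), IsLaminar 2 F ∧ (∀ A ∈ F, 2 ≤ #A) ∧ #F = f n := by
  refine Nat.sSup_mem ?_ (bddAbove_f_set n)
  exact ⟨0, ∅, by simp [IsLaminar]⟩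

namespace IsLaminar

theorem card_le_f_fin {n : ℕ} {F : Finset (Finset (Fin n))} (hF : IsLaminar 2 F)
    (h2 : ∀ A ∈ F, 2 ≤ #A) : #F ≤ f n :=
  le_csSup (bddAbove_f_set n) ⟨F, hF, h2, rfl⟩

variable {F : Finset (Finset α)}

theorem card_le_f [Fintype α] (hF : IsLaminar 2 F) (h2 : ∀ A ∈ F, 2 ≤ #A) :
    #F ≤ f (Fintype.card α) := by
  let e := mapEmbedding (Fintype.equivFin α).toEmbedding
  rw [← card_map e.toEmbedding]
  refine card_le_f_fin ((map_iff _).2 hF) (forall_mem_map.2 fun A hA => ?_)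
  simpa [e, mapEmbedding] using h2 A hA

theorem card_le_f_of_forall_subset {A : Finset α} (hF : IsLaminar 2 F)
    (h2 : ∀ C ∈ F, 2 ≤ #C) (hA : ∀ C ∈ F, C ⊆ A) : #F ≤ f #A := by
  let e := mapEmbedding (Function.Embedding.subtype (· ∈ A))
  let F' := F.image (Finset.subtype (· ∈ A))
  have hF' : F'.map e.toEmbedding = F := by
    rw [map_eq_image, image_image]
    exact (image_congr fun C hC => subtype_map_of_mem (hA C hC)).trans image_id'
  rw [← hF', card_map, ← Fintype.card_coe A]
  refine card_le_f ((map_iff _).1 (hF' ▸ hF)) fun C hC => ?_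
  calc 2 ≤ #(C.map (Function.Embedding.subtype _)) :=
        h2 _ (hF' ▸ mem_map_of_mem e.toEmbedding hC)
    _ = #C := card_map _

theorem card_le_sum_f (hF : IsLaminar 2 F) (h2 : ∀ C ∈ F, 2 ≤ #C)
    {M : Finset (Finset α)} (hcover : ∀ C ∈ F, ∃ A ∈ M, C ⊆ A) :
    #F ≤ ∑ A ∈ M, f #A :=
  calc #F ≤ #(M.biUnion fun A => F.filter (· ⊆ A)) := card_le_card fun C hC => by
        obtain ⟨A, hAM, hCA⟩ := hcover C hC
        exact mem_biUnion.2 ⟨A, hAM, mem_filter.2 ⟨hC, hCA⟩⟩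
    _ ≤ ∑ A ∈ M, #(F.filter (· ⊆ A)) := card_biUnion_le
    _ ≤ ∑ A ∈ M, f #A := sum_le_sum fun A _ =>
        card_le_f_of_forall_subset (hF.subset (filter_subset _ _))
          (fun C hC => h2 C (mem_filter.1 hC).1) fun C hC => (mem_filter.1 hC).2

theorem card_le_one_add_choose_mul [Fintype α] (hF : IsLaminar 2 F)
    (h2 : ∀ C ∈ F, 2 ≤ #C) {M : ℝ} (hM0 : 0 ≤ M)
    (hM : ∀ k ∈ Ico 2 (Fintype.card α), (f k : ℝ) ≤ k.choose 2 * M) :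
    (#F : ℝ) ≤ 1 + (Fintype.card α).choose 2 * M := by
  classical
  set F' := F.erase univ
  have hF' : IsLaminar 2 F' := hF.subset (erase_subset _ _)
  set Mx := F'.filter (Maximal (· ∈ F'))
  have hMx : ∀ A ∈ Mx, #A ∈ Ico 2 (Fintype.card α) := fun A hA => by
    have hAF' := (mem_filter.1 hA).1
    exact mem_Ico.2 ⟨h2 A (mem_of_mem_erase hAF'),
      (card_lt_iff_ne_univ A).2 (ne_of_mem_erase hAF')⟩
  have hcover : ∀ C ∈ F', ∃ A ∈ Mx, C ⊆ A := fun C hC => by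
    obtain ⟨A, hCA, hA⟩ := F'.exists_le_maximal hC
    exact ⟨A, mem_filter.2 ⟨hA.prop, hA⟩, hCA⟩
  have hpairs : ∑ A ∈ Mx, (#A).choose 2 ≤ (Fintype.card α).choose 2 :=
    sum_choose_card_le_of_pairwise_card_inter_lt fun A hA B hB hAB =>
      hF'.card_inter_lt_of_maximal (mem_filter.1 hA).2 (mem_filter.1 hB).2 hAB
  calc (#F : ℝ) ≤ 1 + #F' := by
        have : #F - 1 ≤ #F' := pred_card_le_card_erase
        exact_mod_cast (by omega : #F ≤ 1 + #F')
    _ ≤ 1 + ∑ A ∈ Mx, (f #A : ℝ) := by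
        gcongr
        exact_mod_cast hF'.card_le_sum_f (fun C hC => h2 C (mem_of_mem_erase hC)) hcover
    _ ≤ 1 + ∑ A ∈ Mx, ((#A).choose 2 : ℝ) * M := by
        gcongr with A hA
        exact hM _ (hMx A hA)
    _ ≤ 1 + (Fintype.card α).choose 2 * M := by
        rw [← sum_mul]
        gcongr
        exact_mod_cast hpairs

end IsLaminar

theorem f_recursive_bound_general (n : ℕ) (hne : (Finset.Ico 2 n).Nonempty) :
    (f n : ℝ) / (n.choose 2 : ℝ) ≤
      1 / (n.choose 2 : ℝ) +
        (Finset.Ico 2 n).sup' hne (fun k => (f k : ℝ) / (k.choose 2 : ℝ)) := by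
  set M := (Ico 2 n).sup' hne fun k => (f k : ℝ) / (k.choose 2 : ℝ)
  have hn : 2 < n := nonempty_Ico.1 hne
  have hchoose : ∀ k, 2 ≤ k → (0 : ℝ) < k.choose 2 := fun k hk => by
    exact_mod_cast Nat.choose_pos hk
  have hM : ∀ k ∈ Ico 2 n, (f k : ℝ) ≤ k.choose 2 * M := fun k hk => by
    rw [← div_le_iff₀' (hchoose k (mem_Ico.1 hk).1)]
    exact le_sup' (fun k => (f k : ℝ) / (k.choose 2 : ℝ)) hk
  have hM0 : 0 ≤ M := (div_nonneg (Nat.cast_nonneg _) (Nat.cast_nonneg _)).trans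
    (le_sup' (fun k => (f k : ℝ) / (k.choose 2 : ℝ)) (mem_Ico.2 ⟨le_rfl, hn⟩))
  obtain ⟨F, hF, h2, hFf⟩ := exists_isLaminar_card_eq_f n
  have hfn := hF.card_le_one_add_choose_mul h2 hM0 (by simpa using hM)
  rw [hFf, Fintype.card_fin] at hfn
  rw [div_add' _ _ _ (hchoose n hn.le).ne', div_le_div_iff_of_pos_right (hchoose n hn.le)]
  linarith

/-- Recursive bound: for n > 2,
f(n)/C(n,2) ≤ 1/C(n,2) + max_{2 ≤ k < n} f(k)/C(k,2). -/
theorem f_recursive_bound (n : ℕ) (hn : 2 < n) (hne : (Finset.Ico 2 n).Nonempty) :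
    (f n : ℝ) / (n.choose 2 : ℝ) ≤
      1 / (n.choose 2 : ℝ) +
        (Finset.Ico 2 n).sup' hne (fun k => (f k : ℝ) / (k.choose 2 : ℝ)) :=
  f_recursive_bound_general n hne
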